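/- Define h̃_α = θ h_{α−1} + u h_α + (α+1) h_{α+1} for α = 0, …, M (with h_{−1} = h_{M+1} = 0). If c_0, …, c_M are the roots of He_{M+1}, then for H(v) = ∑_{α=0}^M h_α ℋ_α^{[θ]}(v) and H̃(v) = ∑_{α=0}^M h̃_α ℋ_α^{[θ]}(v), we have H̃(c_j) = (u + c_j√θ) H(c_j) for all j = 0, …, M. -/
import Mathlib


noncomputable def He : ℕ → ℝ → ℝ
  | 0, _ => 1
  | 1, x => x
  | (n + 2), x => x * He (n + 1) x - (n + 1 : ℝ) * He n x

/-- The scaled Hermite basis functions ℋ_α^{[θ]}(v). -/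
noncomputable def Hcal (θ : ℝ) (α : ℕ) (v : ℝ) : ℝ :=
  (1 / Real.sqrt (2 * Real.pi)) * θ ^ (-(((α : ℝ) + 1) / 2)) * He α v *
    Real.exp (-v ^ 2 / 2)

lemma He_rec (α : ℕ) (x : ℝ) :
    x * He α x = He (α + 1) x + (α : ℝ) * He (α - 1) x := by
  cases α with
  | zero => simp [He]
  | succ n =>
      have h2 : He (n + 2) x = x * He (n + 1) x - (n + 1 : ℝ) * He n x := by rw [He]
      simp only [Nat.add_sub_cancel]
      rw [show n + 1 + 1 = n + 2 from rfl, h2]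
      push_cast
      ring

lemma rpow_mul_self (θ : ℝ) (hθ : 0 < θ) (x : ℝ) :
    θ * θ ^ x = θ ^ (1 + x) := by
  rw [Real.rpow_add hθ, Real.rpow_one]

lemma rpow_mul_sqrt (θ : ℝ) (hθ : 0 < θ) (x : ℝ) :
    Real.sqrt θ * θ ^ x = θ ^ (1 / 2 + x) := by
  rw [Real.sqrt_eq_rpow, ← Real.rpow_add hθ]

lemma Hcal_rec (θ : ℝ) (hθ : 0 < θ) (v : ℝ) (α : ℕ) :
    v * Real.sqrt θ * Hcal θ α v =
      θ * Hcal θ (α + 1) v + (α : ℝ) * Hcal θ (α - 1) v := by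
  unfold Hcal
  have hHe := He_rec α v
  cases α with
  | zero =>
      have e1 : θ * θ ^ (-((((0:ℕ) : ℝ) + 1 + 1) / 2)) =
          Real.sqrt θ * θ ^ (-((((0:ℕ) : ℝ) + 1) / 2)) := by
        rw [rpow_mul_self θ hθ, rpow_mul_sqrt θ hθ]
        norm_num
      push_cast at hHe e1 ⊢
      rw [show ((0:ℝ) + 1 + 1) / 2 = (1 + 1) / 2 by norm_num] at e1
      linear_combination (-(1 / Real.sqrt (2 * Real.pi)) * He 1 v *
          Real.exp (-v ^ 2 / 2)) * e1 +
        (Real.sqrt θ * θ ^ (-(((0:ℝ) + 1) / 2)) * (1 / Real.sqrt (2 * Real.pi)) *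
          Real.exp (-v ^ 2 / 2)) * hHe
  | succ n =>
      have e1 : θ * θ ^ (-((((n + 1:ℕ) : ℝ) + 1 + 1) / 2)) =
          Real.sqrt θ * θ ^ (-((((n + 1:ℕ) : ℝ) + 1) / 2)) := by
        rw [rpow_mul_self θ hθ, rpow_mul_sqrt θ hθ]
        congr 1
        push_cast
        ring
      have e2 : θ ^ (-((((n + 1 - 1:ℕ) : ℝ) + 1) / 2)) =
          Real.sqrt θ * θ ^ (-((((n + 1:ℕ) : ℝ) + 1) / 2)) := by
        rw [rpow_mul_sqrt θ hθ]
        congr 1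
        simp only [Nat.add_sub_cancel]
        push_cast
        ring
      simp only [Nat.add_sub_cancel] at hHe ⊢
      push_cast at hHe e1 e2 ⊢
      linear_combination (-(1 / Real.sqrt (2 * Real.pi)) * He (n + 1 + 1) v *
          Real.exp (-v ^ 2 / 2)) * e1 +
        (-((n:ℝ) + 1) * (1 / Real.sqrt (2 * Real.pi)) * He n v *
          Real.exp (-v ^ 2 / 2)) * e2 +
        (Real.sqrt θ * θ ^ (-((((n:ℝ) + 1) + 1) / 2)) * (1 / Real.sqrt (2 * Real.pi)) *
          Real.exp (-v ^ 2 / 2)) * hHe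

theorem shifted_coefficients_multiply_by_velocity
    (M : ℕ) (θ u : ℝ) (hθ : 0 < θ) (h : ℕ → ℝ) (hM1 : h (M + 1) = 0)
    (c : Fin (M + 1) → ℝ) (hroots : ∀ j, He (M + 1) (c j) = 0)
    (ht : ℕ → ℝ)
    (hdef : ∀ α : ℕ, α ≤ M →
      ht α = θ * (if α = 0 then 0 else h (α - 1)) + u * h α + ((α : ℝ) + 1) * h (α + 1)) :
    ∀ j : Fin (M + 1),
      ∑ α ∈ Finset.range (M + 1), ht α * Hcal θ α (c j) =
        (u + c j * Real.sqrt θ) *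
          ∑ α ∈ Finset.range (M + 1), h α * Hcal θ α (c j) := by
  intro j
  set v := c j with hv
  have hz : Hcal θ (M + 1) v = 0 := by
    unfold Hcal
    rw [hroots j]
    ring
  -- rewrite RHS using the recurrence
  have expand : ∀ α : ℕ, (u + v * Real.sqrt θ) * (h α * Hcal θ α v) =
      u * h α * Hcal θ α v + h α * (θ * Hcal θ (α + 1) v) +
        h α * ((α : ℝ) * Hcal θ (α - 1) v) := by
    intro α
    linear_combination (h α) * (Hcal_rec θ hθ v α)
  rw [Finset.mul_sum]
  rw [Finset.sum_congr rfl fun α _ => expand α]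
  rw [Finset.sum_congr rfl fun α hα =>
    (by rw [hdef α (Nat.lt_succ_iff.mp (Finset.mem_range.mp hα))]; ring :
      ht α * Hcal θ α v =
        θ * (if α = 0 then 0 else h (α - 1)) * Hcal θ α v + u * h α * Hcal θ α v +
          ((α : ℝ) + 1) * h (α + 1) * Hcal θ α v)]
  simp only [Finset.sum_add_distrib]
  have A : ∑ α ∈ Finset.range (M + 1),
      θ * (if α = 0 then 0 else h (α - 1)) * Hcal θ α v =
      ∑ α ∈ Finset.range (M + 1), h α * (θ * Hcal θ (α + 1) v) := by
    rw [Finset.sum_range_succ' (fun α => θ * (if α = 0 then 0 else h (α - 1)) * Hcal θ α v) M,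
        Finset.sum_range_succ (fun α => h α * (θ * Hcal θ (α + 1) v)) M]
    rw [hz]
    simp only [Nat.succ_ne_zero, if_false, Nat.add_sub_cancel]
    rw [if_pos trivial,
      Finset.sum_congr rfl (fun x _ => by ring :
        ∀ x ∈ Finset.range M, θ * h x * Hcal θ (x + 1) v = h x * (θ * Hcal θ (x + 1) v))]
    ring
  have B : ∑ α ∈ Finset.range (M + 1), ((α : ℝ) + 1) * h (α + 1) * Hcal θ α v =
      ∑ α ∈ Finset.range (M + 1), h α * ((α : ℝ) * Hcal θ (α - 1) v) := by
    rw [Finset.sum_range_succ (fun α => ((α : ℝ) + 1) * h (α + 1) * Hcal θ α v) M,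
        Finset.sum_range_succ' (fun α => h α * ((α : ℝ) * Hcal θ (α - 1) v)) M]
    rw [hM1]
    simp only [Nat.add_sub_cancel, Nat.cast_zero, Nat.cast_add, Nat.cast_one]
    rw [Finset.sum_congr rfl (fun x _ => by ring :
        ∀ x ∈ Finset.range M, ((x:ℝ) + 1) * h (x + 1) * Hcal θ x v =
          h (x + 1) * ((((x:ℕ):ℝ) + 1) * Hcal θ x v))]
    ring
  linarith [A, B]
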